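/- arXiv:0904.3802 — 6 statements merged into one kernel-verified Lean document; each statement's English description precedes it below -/
import Mathlib

section
/- For the map f(x₁,x₂) = (x₁/2, 2x₂ mod 1) on the open unit square, the set Λ = ⋂_{n≥0} closure(fⁿ(K⁺)) equals the vertical segment {(0, x₂) : 0 ≤ x₂ ≤ 1}, and consequently dim_H Λ = 1 (while 1 − χ_u/χ_s = 1 + (log 2)/(log 2) = 2, so the dimension formula fails for this non-transversal map). -/
open Set

/-!
The first coordinate is contracted by `1/2` while the second is expanded by the doubling map,
so `fⁿ(K⁺)` lies in the strip `[0, 2⁻ⁿ] × [0, 1]` and `Λ` lies on the segment `{0} × [0, 1]`.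
Conversely, every point whose second coordinate is irrational has an orbit that never hits
`x₂ = 1/2` or the boundary, and `(x₁, y) = fⁿ(2ⁿx₁, y/2ⁿ)`; hence `fⁿ(K⁺)` contains the dense
part `(0, 2⁻ⁿ) × ((0, 1) ∖ ℚ)` of the strip, whose closure is the whole strip.
The segment has Hausdorff dimension one.
-/

noncomputable def doubling (y : ℝ) : ℝ := if y < 1 / 2 then 2 * y else 2 * y - 1

noncomputable def nonTransversalMap : ℝ × ℝ → ℝ × ℝ := Prod.map (· / 2) doubling

/-- The set `K⁺` of the paper. -/
def survivors {α : Type*} [TopologicalSpace α] (f : α → α) (K N : Set α) : Set α :=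
  {p ∈ K | ∀ n : ℕ, f^[n] p ∉ N ∪ frontier K}

lemma mem_survivors_of_forall_iterate_mem_diff {α : Type*} [TopologicalSpace α] {f : α → α}
    {K N : Set α} (hK : IsOpen K) {p : α} (h : ∀ n : ℕ, f^[n] p ∈ K \ N) :
    p ∈ survivors f K N := by
  refine ⟨(h 0).1, fun n hn => hn.elim (h n).2 fun hfr => ?_⟩
  rw [hK.frontier_eq] at hfr
  exact hfr.2 (h n).1

lemma iInter_Icc_zero_pow {r : ℝ} (h0 : 0 ≤ r) (h1 : r < 1) :
    ⋂ n : ℕ, Icc 0 (r ^ n) = {0} := by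
  refine Subset.antisymm (fun x hx => ?_) fun x hx => mem_iInter.2 fun n => ?_
  · rw [mem_iInter] at hx
    exact le_antisymm
      (ge_of_tendsto' (tendsto_pow_atTop_nhds_zero_of_lt_one h0 h1) fun n => (hx n).2) (hx 0).1
  · rw [mem_singleton_iff.1 hx]
    exact ⟨le_rfl, pow_nonneg h0 n⟩

lemma dimH_singleton_prod {X Y : Type*} [EMetricSpace X] [EMetricSpace Y] (a : X) (s : Set Y) :
    dimH ({a} ×ˢ s) = dimH s := by
  have hiso : Isometry (Prod.mk a : Y → X × Y) := fun y y' => by simp [Prod.edist_eq]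
  rw [singleton_prod, hiso.dimH_image]

lemma mapsTo_doubling_Ico : MapsTo doubling (Ico 0 1) (Ico 0 1) := by
  rintro y ⟨h0, h1⟩
  unfold doubling
  split_ifs <;> constructor <;> linarith

lemma mapsTo_doubling_irrational :
    MapsTo doubling (Ioo 0 1 ∩ {y | Irrational y}) (Ioo 0 1 ∩ {y | Irrational y}) := by
  rintro y ⟨⟨h0, h1⟩, hy⟩
  have h2y : Irrational (2 * y) := by simpa using hy.natCast_mul two_ne_zero
  have hne : y ≠ 1 / 2 := by simpa using hy.ne_rat (1 / 2)
  unfold doubling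
  split_ifs with hlt
  · exact ⟨⟨by linarith, by linarith⟩, h2y⟩
  · have : 1 / 2 < y := lt_of_le_of_ne (not_lt.1 hlt) hne.symm
    exact ⟨⟨by linarith, by linarith⟩, by simpa using h2y.sub_natCast 1⟩

lemma doubling_iterate_div_two_pow {y : ℝ} (hy : y < 1) (n : ℕ) :
    doubling^[n] (y / 2 ^ n) = y := by
  induction n with
  | zero => simp
  | succ n ih =>
    have h2n : (1 : ℝ) ≤ 2 ^ n := one_le_pow₀ one_le_two
    have hlt : y / 2 ^ (n + 1) < 1 / 2 := by
      rw [div_lt_iff₀ (by positivity), pow_succ]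
      linarith
    rw [Function.iterate_succ_apply, doubling, if_pos hlt]
    convert ih using 2
    rw [pow_succ]
    field_simp

lemma nonTransversalMap_iterate (n : ℕ) (p : ℝ × ℝ) :
    nonTransversalMap^[n] p = (p.1 / 2 ^ n, doubling^[n] p.2) := by
  simp only [nonTransversalMap, Prod.map_iterate, div_eq_mul_inv, mul_right_iterate, inv_pow]
  rfl

lemma image_iterate_square_subset (n : ℕ) :
    nonTransversalMap^[n] '' (Ioo 0 1 ×ˢ Ioo 0 1) ⊆ Icc 0 ((1 / 2) ^ n) ×ˢ Icc 0 1 := by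
  rintro _ ⟨p, ⟨⟨hx0, hx1⟩, hy⟩, rfl⟩
  rw [nonTransversalMap_iterate]
  refine ⟨⟨by positivity, ?_⟩, Ico_subset_Icc_self (mapsTo_doubling_Ico.iterate n
    (Ioo_subset_Ico_self hy))⟩
  rw [div_pow, one_pow]
  exact div_le_div_of_nonneg_right hx1.le (by positivity)

lemma mk_mem_survivors_of_irrational {x y : ℝ} (hx : x ∈ Ioo 0 1) (hy01 : y ∈ Ioo 0 1)
    (hy : Irrational y) :
    (x, y) ∈ survivors nonTransversalMap (Ioo 0 1 ×ˢ Ioo 0 1)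
      {p ∈ Ioo 0 1 ×ˢ Ioo 0 1 | p.2 = 1 / 2} := by
  refine mem_survivors_of_forall_iterate_mem_diff (isOpen_Ioo.prod isOpen_Ioo) fun n => ?_
  obtain ⟨hyn01, hyn⟩ := mapsTo_doubling_irrational.iterate n ⟨hy01, hy⟩
  have hxn : x / 2 ^ n ∈ Ioo 0 1 :=
    ⟨by have := hx.1; positivity,
      (div_le_self hx.1.le (one_le_pow₀ one_le_two)).trans_lt hx.2⟩
  rw [nonTransversalMap_iterate]
  exact ⟨⟨hxn, hyn01⟩, fun h => hyn.ne_rat (1 / 2) (by simpa using h.2)⟩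

lemma strip_irrational_subset_image_iterate_survivors (n : ℕ) :
    Ioo 0 ((1 / 2) ^ n) ×ˢ (Ioo 0 1 ∩ {y | Irrational y}) ⊆
      nonTransversalMap^[n] '' survivors nonTransversalMap
        (Ioo 0 1 ×ˢ Ioo 0 1) {p ∈ Ioo 0 1 ×ˢ Ioo 0 1 | p.2 = 1 / 2} := by
  rintro ⟨x, y⟩ ⟨⟨hx0, hx1⟩, hy01, hy⟩
  have h2n : (0 : ℝ) < 2 ^ n := by positivity
  have hyn : Irrational (y / 2 ^ n) := by simpa using hy.div_natCast (m := 2 ^ n) (by positivity)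
  have hyn01 : y / 2 ^ n ∈ Ioo 0 1 :=
    ⟨by have := hy01.1; positivity,
      (div_le_self hy01.1.le (one_le_pow₀ one_le_two)).trans_lt hy01.2⟩
  have hxn01 : x * 2 ^ n ∈ Ioo 0 1 := by
    rw [div_pow, one_pow, lt_div_iff₀ h2n] at hx1
    exact ⟨by positivity, hx1⟩
  refine ⟨(x * 2 ^ n, y / 2 ^ n), mk_mem_survivors_of_irrational hxn01 hyn01 hyn, ?_⟩
  rw [nonTransversalMap_iterate, doubling_iterate_div_two_pow hy01.2, mul_div_cancel_right₀ _
    h2n.ne']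

lemma closure_strip_irrational {c : ℝ} (hc : 0 < c) :
    closure (Ioo 0 c ×ˢ (Ioo 0 1 ∩ {y | Irrational y})) = Icc 0 c ×ˢ Icc 0 1 := by
  rw [closure_prod_eq, closure_Ioo hc.ne]
  congr 1
  refine (closure_minimal (fun y hy => Ioo_subset_Icc_self hy.1) isClosed_Icc).antisymm ?_
  rw [← closure_Ioo zero_ne_one]
  exact closure_minimal (dense_irrational.open_subset_closure_inter isOpen_Ioo) isClosed_closure

lemma Real.dimH_Icc {a b : ℝ} (h : a < b) : dimH (Icc a b) = 1 := by
  rw [Real.dimH_of_nonempty_interior (by simpa using h), Module.finrank_self, Nat.cast_one]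

lemma iInter_closure_image_iterate_survivors :
    ⋂ n : ℕ, closure (nonTransversalMap^[n] '' survivors nonTransversalMap (Ioo 0 1 ×ˢ Ioo 0 1)
      {p ∈ Ioo 0 1 ×ˢ Ioo 0 1 | p.2 = 1 / 2}) = {0} ×ˢ Icc 0 1 := by
  refine Subset.antisymm (fun q hq => ?_) (subset_iInter fun n => ?_)
  · have hstrip : ∀ n : ℕ, q ∈ Icc 0 ((1 / 2) ^ n) ×ˢ Icc 0 1 := fun n =>
      closure_minimal ((image_mono (sep_subset _ _)).trans (image_iterate_square_subset n))
        (isClosed_Icc.prod isClosed_Icc) (mem_iInter.1 hq n)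
    have hq1 : q.1 ∈ ⋂ n : ℕ, Icc (0 : ℝ) ((1 / 2) ^ n) := mem_iInter.2 fun n => (hstrip n).1
    rw [iInter_Icc_zero_pow (by norm_num) (by norm_num)] at hq1
    exact ⟨hq1, (hstrip 0).2⟩
  · calc {0} ×ˢ Icc 0 1 ⊆ Icc 0 ((1 / 2) ^ n) ×ˢ Icc (0 : ℝ) 1 :=
          prod_mono (singleton_subset_iff.2 ⟨le_rfl, by positivity⟩) le_rfl
      _ = closure (Ioo 0 ((1 / 2) ^ n) ×ˢ (Ioo 0 1 ∩ {y | Irrational y})) :=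
          (closure_strip_irrational (by positivity)).symm
      _ ⊆ _ := closure_mono (strip_irrational_subset_image_iterate_survivors n)

/-- For the map `f(x₁,x₂) = (x₁/2, 2x₂ mod 1)` on the open unit square,
the set `Λ = ⋂ n, closure (fⁿ(K⁺))` equals the vertical segment `{(0,x₂) : 0 ≤ x₂ ≤ 1}`,
so `dim_H Λ = 1`, while the dimension formula would give
`1 - χ_u/χ_s = 1 - log 2 / log (1/2) = 2 ≠ dim_H Λ`. -/
theorem non_transversal_example_dimension
    (f : ℝ × ℝ → ℝ × ℝ)
    (hf : ∀ p : ℝ × ℝ, f p =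
      (p.1 / 2, if p.2 < 1 / 2 then 2 * p.2 else 2 * p.2 - 1))
    (K : Set (ℝ × ℝ)) (hK : K = Set.Ioo (0 : ℝ) 1 ×ˢ Set.Ioo (0 : ℝ) 1)
    (N : Set (ℝ × ℝ)) (hN : N = {p ∈ K | p.2 = 1 / 2})
    (Kplus : Set (ℝ × ℝ))
    (hKplus : Kplus = {p ∈ K | ∀ n : ℕ, f^[n] p ∉ N ∪ frontier K})
    (Lam : Set (ℝ × ℝ))
    (hLam : Lam = ⋂ n : ℕ, closure (f^[n] '' Kplus)) :
    Lam = {p : ℝ × ℝ | p.1 = 0 ∧ p.2 ∈ Set.Icc (0 : ℝ) 1} ∧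
    dimH Lam = 1 ∧
    1 - Real.log 2 / Real.log (1 / 2) = 2 ∧
    ENNReal.ofReal (1 - Real.log 2 / Real.log (1 / 2)) ≠ dimH Lam := by
  obtain rfl : f = nonTransversalMap := funext hf
  subst hK hN
  have hΛ : Lam = {0} ×ˢ Icc 0 1 := by
    rw [hLam, hKplus]
    exact iInter_closure_image_iterate_survivors
  have hdim : dimH Lam = 1 := by rw [hΛ, dimH_singleton_prod, Real.dimH_Icc zero_lt_one]
  have hratio : 1 - Real.log 2 / Real.log (1 / 2) = 2 := by
    rw [one_div, Real.log_inv, div_neg, div_self (Real.log_pos one_lt_two).ne']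
    norm_num
  refine ⟨hΛ, hdim, hratio, ?_⟩
  rw [hratio, hdim]
  norm_num
end

section
/- Let 0 < λ < γ, ρ > 0, 0 ≤ ρ_ψ < ρ/2, and let t ∈ ℝ with |t| ≤ ρ_ψ. If v = (v₁, v₂) ∈ ℝ² satisfies v₂ > 0 and −ρ_ψ/(γ−λ) ≤ v₁/v₂ ≤ (ρ+ρ_ψ)/(γ−λ), then the image u = (λv₁ + (ρ+t)v₂, γv₂) of v under the matrix [[λ, ρ+t],[0, γ]] satisfies u₂ > 0 and −ρ_ψ·λ/(γ(γ−λ)) + (ρ−ρ_ψ)/γ ≤ u₁/u₂ ≤ (ρ+ρ_ψ)·λ/(γ(γ−λ)) + (ρ+ρ_ψ)/γ; in particular −ρ_ψ/(γ−λ) ≤ u₁/u₂ ≤ (ρ+ρ_ψ)/(γ−λ), so the cone C^u = {(v₁,v₂) : v₂ ≠ 0 and −ρ_ψ/(γ−λ) ≤ v₁/v₂ ≤ (ρ+ρ_ψ)/(γ−λ)} ∪ {0} is mapped into itself. -/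
/-!
The matrix `[[λ, c], [0, γ]]` acts on slopes `v₁ / v₂` by `s ↦ (λ s + c) / γ`, a map that is
monotone in `s` and `c` and whose fixed slope is `c / (γ - λ)`; every slope below that fixed
slope is moved up. Hence the slope of the image is squeezed between the images of the two edge
slopes with the two extreme values `ρ ∓ ρ_ψ` of `c = ρ + t`. The upper edge `(ρ + ρ_ψ) / (γ - λ)`
is the fixed slope for `c = ρ + ρ_ψ`, and the lower edge `-ρ_ψ / (γ - λ)` lies below the fixed
slope `(ρ - ρ_ψ) / (γ - λ)`, so both edges are mapped back into the cone.
-/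

/-- The slope of `[[lam, c], [0, gam]] *ᵥ v` as a function of the slope `s = v₁ / v₂` of `v`. -/
noncomputable def slopeAction (lam c gam s : ℝ) : ℝ := (lam * s + c) / gam

lemma slopeAction_div {lam c gam v1 v2 : ℝ} (hv2 : v2 ≠ 0) :
    (lam * v1 + c * v2) / (gam * v2) = slopeAction lam c gam (v1 / v2) := by
  unfold slopeAction
  field_simp

lemma slopeAction_eq_add (lam c gam s : ℝ) :
    slopeAction lam c gam s = s * lam / gam + c / gam := by
  unfold slopeAction
  ring

lemma slopeAction_le_slopeAction {lam c c' gam s s' : ℝ} (hlam : 0 ≤ lam) (hgam : 0 < gam)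
    (hs : s ≤ s') (hc : c ≤ c') : slopeAction lam c gam s ≤ slopeAction lam c' gam s' := by
  unfold slopeAction
  gcongr

lemma slopeAction_fixedSlope {lam c gam : ℝ} (hgam : gam ≠ 0) (hlamgam : lam < gam) :
    slopeAction lam c gam (c / (gam - lam)) = c / (gam - lam) := by
  have : gam - lam ≠ 0 := (sub_pos.mpr hlamgam).ne'
  unfold slopeAction
  field_simp
  ring

lemma le_slopeAction_of_le_fixedSlope {lam c gam s : ℝ} (hgam : 0 < gam) (hlamgam : lam < gam)
    (hs : s ≤ c / (gam - lam)) : s ≤ slopeAction lam c gam s := by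
  rw [le_div_iff₀ (sub_pos.mpr hlamgam)] at hs
  rw [slopeAction, le_div_iff₀ hgam]
  linarith

theorem upper_branch_maps_unstable_cone_general
    (lam gam rho rho_psi t v1 v2 : ℝ)
    (hlam : 0 < lam) (hlamgam : lam < gam)
    (hrho : 0 < rho)
    (ht : |t| ≤ rho_psi)
    (hv2 : 0 < v2)
    (hlow : -rho_psi / (gam - lam) ≤ v1 / v2)
    (hup : v1 / v2 ≤ (rho + rho_psi) / (gam - lam)) :
    0 < gam * v2 ∧
    -rho_psi * lam / (gam * (gam - lam)) + (rho - rho_psi) / gam ≤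
      (lam * v1 + (rho + t) * v2) / (gam * v2) ∧
    (lam * v1 + (rho + t) * v2) / (gam * v2) ≤
      (rho + rho_psi) * lam / (gam * (gam - lam)) + (rho + rho_psi) / gam ∧
    -rho_psi / (gam - lam) ≤ (lam * v1 + (rho + t) * v2) / (gam * v2) ∧
    (lam * v1 + (rho + t) * v2) / (gam * v2) ≤ (rho + rho_psi) / (gam - lam) := by
  have hgam : 0 < gam := hlam.trans hlamgam
  obtain ⟨ht_low, ht_up⟩ := abs_le.mp ht
  rw [slopeAction_div hv2.ne']
  have image_low : slopeAction lam (rho - rho_psi) gam (-rho_psi / (gam - lam)) ≤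
      slopeAction lam (rho + t) gam (v1 / v2) :=
    slopeAction_le_slopeAction hlam.le hgam hlow (by linarith)
  have image_up : slopeAction lam (rho + t) gam (v1 / v2) ≤
      slopeAction lam (rho + rho_psi) gam ((rho + rho_psi) / (gam - lam)) :=
    slopeAction_le_slopeAction hlam.le hgam hup (by linarith)
  have edge_low : -rho_psi / (gam - lam) ≤
      slopeAction lam (rho - rho_psi) gam (-rho_psi / (gam - lam)) :=
    le_slopeAction_of_le_fixedSlope hgam hlamgam
      (div_le_div_of_nonneg_right (by linarith) (sub_pos.mpr hlamgam).le)
  refine ⟨mul_pos hgam hv2, ?_, ?_, edge_low.trans image_low,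
    image_up.trans_eq (slopeAction_fixedSlope hgam.ne' hlamgam)⟩
  · convert image_low using 1
    rw [slopeAction_eq_add, mul_comm gam, ← div_div]
    ring
  · convert image_up using 1
    rw [slopeAction_eq_add, mul_comm gam, ← div_div]
    ring

/-- The derivative `[[λ, ρ+t],[0, γ]]` of the upper branch of the skew
Belykh map maps the unstable cone `C^u` (spanned by `(-ρ_ψ/(γ-λ), 1)` and
`((ρ+ρ_ψ)/(γ-λ), 1)`) into itself, with the stated sharper slope bounds. -/
theorem upper_branch_maps_unstable_cone
    (lam gam rho rho_psi t v1 v2 : ℝ)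
    (hlam : 0 < lam) (hlamgam : lam < gam)
    (hrho : 0 < rho)
    (hrp_nonneg : 0 ≤ rho_psi) (hrp_lt : rho_psi < rho / 2)
    (ht : |t| ≤ rho_psi)
    (hv2 : 0 < v2)
    (hlow : -rho_psi / (gam - lam) ≤ v1 / v2)
    (hup : v1 / v2 ≤ (rho + rho_psi) / (gam - lam)) :
    0 < gam * v2 ∧
    -rho_psi * lam / (gam * (gam - lam)) + (rho - rho_psi) / gam ≤
      (lam * v1 + (rho + t) * v2) / (gam * v2) ∧
    (lam * v1 + (rho + t) * v2) / (gam * v2) ≤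
      (rho + rho_psi) * lam / (gam * (gam - lam)) + (rho + rho_psi) / gam ∧
    -rho_psi / (gam - lam) ≤ (lam * v1 + (rho + t) * v2) / (gam * v2) ∧
    (lam * v1 + (rho + t) * v2) / (gam * v2) ≤ (rho + rho_psi) / (gam - lam) :=
  upper_branch_maps_unstable_cone_general lam gam rho rho_psi t v1 v2 hlam hlamgam hrho ht hv2 hlow
    hup
end

section
/- Let 0 < λ < γ, ρ > 0, 0 ≤ ρ_ψ < ρ/2, and let t ∈ ℝ with |t| ≤ ρ_ψ. If v = (v₁, v₂) ∈ ℝ² satisfies v₂ > 0 and −ρ_ψ/(γ−λ) ≤ v₁/v₂ ≤ (ρ+ρ_ψ)/(γ−λ), then the image u = (λv₁ + t·v₂, γv₂) of v under the matrix [[λ, t],[0, γ]] satisfies u₂ > 0 and −ρ_ψ·λ/(γ(γ−λ)) − ρ_ψ/γ ≤ u₁/u₂ ≤ (ρ+ρ_ψ)·λ/(γ(γ−λ)) + ρ_ψ/γ; in particular −ρ_ψ/(γ−λ) ≤ u₁/u₂ ≤ (ρ+ρ_ψ)/(γ−λ), so the cone C^u = {(v₁,v₂) : v₂ ≠ 0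 and −ρ_ψ/(γ−λ) ≤ v₁/v₂ ≤ (ρ+ρ_ψ)/(γ−λ)} ∪ {0} is mapped into itself. -/
/-!
In slope coordinates `s = v₁ / v₂` the matrix `[[λ, t], [0, γ]]` acts by the increasing affine
map `s ↦ (λ s + t) / γ`, and `|t| ≤ ρ_ψ` squeezes it between `s ↦ (λ s - ρ_ψ) / γ` and
`s ↦ (λ s + ρ_ψ) / γ`. Since `λ < γ`, the first fixes the lower edge `-ρ_ψ / (γ - λ)` of the
cone, and the second fixes `ρ_ψ / (γ - λ)`, which lies below the upper edge
`(ρ + ρ_ψ) / (γ - λ)` and so pulls that edge inwards.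
-/

open Set

lemma mul_add_mul_div_mul_right (lam gam t v1 : ℝ) {v2 : ℝ} (hv2 : v2 ≠ 0) :
    (lam * v1 + t * v2) / (gam * v2) = (lam * (v1 / v2) + t) / gam := by
  field_simp

lemma affine_div_mem_Icc {lam gam c t a b s : ℝ} (hlam : 0 ≤ lam) (hgam : 0 < gam)
    (ht : |t| ≤ c) (hs : s ∈ Icc a b) :
    (lam * s + t) / gam ∈ Icc ((lam * a - c) / gam) ((lam * b + c) / gam) := by
  obtain ⟨htc, hct⟩ := abs_le.mp ht
  constructor
  · gcongr ?_ / _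
    linarith [mul_le_mul_of_nonneg_left hs.1 hlam]
  · gcongr ?_ / _
    linarith [mul_le_mul_of_nonneg_left hs.2 hlam]

lemma affine_div_neg_div_sub_eq {lam gam : ℝ} (c : ℝ) (hgam : gam ≠ 0) (hlg : gam - lam ≠ 0) :
    (lam * (-c / (gam - lam)) - c) / gam = -c / (gam - lam) := by
  field_simp
  ring

lemma affine_div_add_div_sub_le {lam gam r : ℝ} (c : ℝ) (hr : 0 ≤ r) (hgam : 0 < gam)
    (hlg : lam < gam) :
    (lam * ((r + c) / (gam - lam)) + c) / gam ≤ (r + c) / (gam - lam) := by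
  have hgl : 0 < gam - lam := sub_pos.mpr hlg
  rw [div_le_iff₀ hgam, ← sub_nonneg]
  have key : (r + c) / (gam - lam) * gam - (lam * ((r + c) / (gam - lam)) + c) = r := by
    field_simp
    ring
  rwa [key]

theorem lower_branch_maps_unstable_cone_general
    (lam gam rho rho_psi t v1 v2 : ℝ)
    (hlam : 0 < lam) (hlamgam : lam < gam)
    (hrho : 0 < rho)
    (ht : |t| ≤ rho_psi)
    (hv2 : 0 < v2)
    (hlow : -rho_psi / (gam - lam) ≤ v1 / v2)
    (hup : v1 / v2 ≤ (rho + rho_psi) / (gam - lam)) :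
    0 < gam * v2 ∧
    -rho_psi * lam / (gam * (gam - lam)) - rho_psi / gam ≤
      (lam * v1 + t * v2) / (gam * v2) ∧
    (lam * v1 + t * v2) / (gam * v2) ≤
      (rho + rho_psi) * lam / (gam * (gam - lam)) + rho_psi / gam ∧
    -rho_psi / (gam - lam) ≤ (lam * v1 + t * v2) / (gam * v2) ∧
    (lam * v1 + t * v2) / (gam * v2) ≤ (rho + rho_psi) / (gam - lam) := by
  have hgam : 0 < gam := hlam.trans hlamgam
  have hslope := affine_div_mem_Icc hlam.le hgam ht ⟨hlow, hup⟩
  rw [← mul_add_mul_div_mul_right lam gam t v1 hv2.ne'] at hslope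
  have hlower : -rho_psi * lam / (gam * (gam - lam)) - rho_psi / gam =
      (lam * (-rho_psi / (gam - lam)) - rho_psi) / gam := by
    rw [← div_div]; ring
  have hupper : (rho + rho_psi) * lam / (gam * (gam - lam)) + rho_psi / gam =
      (lam * ((rho + rho_psi) / (gam - lam)) + rho_psi) / gam := by
    rw [← div_div]; ring
  refine ⟨mul_pos hgam hv2, hlower ▸ hslope.1, hupper ▸ hslope.2, ?_,
    hslope.2.trans (affine_div_add_div_sub_le rho_psi hrho.le hgam hlamgam)⟩
  rw [← affine_div_neg_div_sub_eq rho_psi hgam.ne' (sub_pos.mpr hlamgam).ne']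
  exact hslope.1

/-- The derivative `[[λ, t],[0, γ]]` of the lower branch of the skew
Belykh map maps the unstable cone `C^u` (spanned by `(-ρ_ψ/(γ-λ), 1)` and
`((ρ+ρ_ψ)/(γ-λ), 1)`) into itself, with the stated sharper slope bounds. -/
theorem lower_branch_maps_unstable_cone
    (lam gam rho rho_psi t v1 v2 : ℝ)
    (hlam : 0 < lam) (hlamgam : lam < gam)
    (hrho : 0 < rho)
    (hrp_nonneg : 0 ≤ rho_psi) (hrp_lt : rho_psi < rho / 2)
    (ht : |t| ≤ rho_psi)
    (hv2 : 0 < v2)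
    (hlow : -rho_psi / (gam - lam) ≤ v1 / v2)
    (hup : v1 / v2 ≤ (rho + rho_psi) / (gam - lam)) :
    0 < gam * v2 ∧
    -rho_psi * lam / (gam * (gam - lam)) - rho_psi / gam ≤
      (lam * v1 + t * v2) / (gam * v2) ∧
    (lam * v1 + t * v2) / (gam * v2) ≤
      (rho + rho_psi) * lam / (gam * (gam - lam)) + rho_psi / gam ∧
    -rho_psi / (gam - lam) ≤ (lam * v1 + t * v2) / (gam * v2) ∧
    (lam * v1 + t * v2) / (gam * v2) ≤ (rho + rho_psi) / (gam - lam) :=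
  lower_branch_maps_unstable_cone_general lam gam rho rho_psi t v1 v2 hlam hlamgam hrho ht hv2 hlow
    hup
end

section
/- Let 0 < λ < γ, ρ > 0 and 0 ≤ ρ_ψ < ρ/2. The inequality −ρ_ψ·λ/(γ(γ−λ)) + (ρ−ρ_ψ)/γ > (ρ+ρ_ψ)·λ/(γ(γ−λ)) + ρ_ψ/γ holds if and only if γ(ρ − 2ρ_ψ) > 2λρ; under this condition the cone spanned by the vectors (−ρ_ψ·λ/(γ(γ−λ)) + (ρ−ρ_ψ)/γ, 1) and ((ρ+ρ_ψ)·λ/(γ(γ−λ)) + (ρ+ρ_ψ)/γ, 1) and the cone spanned by the vectors (−ρ_ψ·λ/(γ(γ−λ)) − ρ_ψ/γ, 1) and ((ρ+ρ_ψ)·λ/(γ(γ−λ)) + ρ_ψ/γ, 1) intersect only in the zero vector. In the limiting case ρ_ψ = 0 the condition reads γ > 2λ. -/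
/-!
A vector of the cone spanned by `(a, 1)` and `(b, 1)` with second coordinate `h` has first
coordinate between `min a b * h` and `max a b * h`, and it vanishes once `h = 0`. So two such cones
meet only in `0` as soon as both slopes of the first exceed both slopes of the second. For the
slopes of the statement three of the four gaps are positive outright, and the remaining one, between
the left slope of the first cone and the right slope of the second, equals
`(γ (ρ - 2ρ_ψ) - 2λρ) / (γ (γ - λ))`.
-/

def slopeCone (a b : ℝ) : Set (ℝ × ℝ) :=
  {w | ∃ s t : ℝ, 0 ≤ s ∧ 0 ≤ t ∧ w = s • ((a, 1) : ℝ × ℝ) + t • ((b, 1) : ℝ × ℝ)}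

namespace slopeCone

variable {a b : ℝ} {w : ℝ × ℝ}

lemma exists_of_mem (hw : w ∈ slopeCone a b) :
    ∃ s t : ℝ, 0 ≤ s ∧ 0 ≤ t ∧ w.1 = s * a + t * b ∧ w.2 = s + t := by
  obtain ⟨s, t, hs, ht, rfl⟩ := hw
  exact ⟨s, t, hs, ht, by simp, by simp⟩

lemma min_mul_snd_le_fst (hw : w ∈ slopeCone a b) : min a b * w.2 ≤ w.1 := by
  obtain ⟨s, t, hs, ht, h1, h2⟩ := exists_of_mem hw
  rw [h1, h2]
  calc min a b * (s + t) = s * min a b + t * min a b := by ring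
    _ ≤ s * a + t * b := by gcongr; exacts [min_le_left a b, min_le_right a b]

lemma fst_le_max_mul_snd (hw : w ∈ slopeCone a b) : w.1 ≤ max a b * w.2 := by
  obtain ⟨s, t, hs, ht, h1, h2⟩ := exists_of_mem hw
  rw [h1, h2]
  calc s * a + t * b ≤ s * max a b + t * max a b := by
        gcongr; exacts [le_max_left a b, le_max_right a b]
    _ = max a b * (s + t) := by ring

lemma snd_pos_of_ne_zero (hw : w ∈ slopeCone a b) (hw0 : w ≠ 0) : 0 < w.2 := by
  obtain ⟨s, t, hs, ht, h1, h2⟩ := exists_of_mem hw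
  refine h2 ▸ (add_nonneg hs ht).lt_of_ne fun hst => hw0 ?_
  obtain ⟨rfl, rfl⟩ : s = 0 ∧ t = 0 := ⟨by linarith, by linarith⟩
  exact Prod.ext (by simpa using h1) (by simpa using h2)

lemma zero_mem : (0 : ℝ × ℝ) ∈ slopeCone a b :=
  ⟨0, 0, le_rfl, le_rfl, by simp⟩

lemma inter_eq_zero {a₁ a₂ b₁ b₂ : ℝ} (h : max b₁ b₂ < min a₁ a₂) :
    slopeCone a₁ a₂ ∩ slopeCone b₁ b₂ = {0} := by
  refine Set.eq_singleton_iff_unique_mem.mpr ⟨⟨zero_mem, zero_mem⟩, ?_⟩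
  rintro w ⟨hA, hB⟩
  by_contra hw0
  have hpos := snd_pos_of_ne_zero hA hw0
  exact (mul_lt_mul_of_pos_right h hpos).not_ge
    ((min_mul_snd_le_fst hA).trans (fst_le_max_mul_snd hB))

end slopeCone

section BelykhSlopes

variable {lam gam rho rho_psi : ℝ}

lemma left_slope_sub_right_slope (hgam : gam ≠ 0) (hlamgam : gam - lam ≠ 0) :
    (-rho_psi * lam / (gam * (gam - lam)) + (rho - rho_psi) / gam) -
        ((rho + rho_psi) * lam / (gam * (gam - lam)) + rho_psi / gam) =
      (gam * (rho - 2 * rho_psi) - 2 * lam * rho) / (gam * (gam - lam)) := by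
  field_simp
  ring

lemma left_slope_gt_right_slope_iff (hlam : 0 < lam) (hlamgam : lam < gam) :
    -rho_psi * lam / (gam * (gam - lam)) + (rho - rho_psi) / gam >
        (rho + rho_psi) * lam / (gam * (gam - lam)) + rho_psi / gam ↔
      gam * (rho - 2 * rho_psi) > 2 * lam * rho := by
  have hgam : 0 < gam := hlam.trans hlamgam
  have hD : 0 < gam * (gam - lam) := mul_pos hgam (sub_pos.mpr hlamgam)
  rw [gt_iff_lt, ← sub_pos, left_slope_sub_right_slope hgam.ne' (sub_pos.mpr hlamgam).ne',
    div_pos_iff_of_pos_right hD, sub_pos, gt_iff_lt]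

lemma image_slopes_separated (hlam : 0 < lam) (hlamgam : lam < gam) (hrho : 0 < rho)
    (hrp_nonneg : 0 ≤ rho_psi) (hcond : gam * (rho - 2 * rho_psi) > 2 * lam * rho) :
    max (-rho_psi * lam / (gam * (gam - lam)) - rho_psi / gam)
        ((rho + rho_psi) * lam / (gam * (gam - lam)) + rho_psi / gam) <
      min (-rho_psi * lam / (gam * (gam - lam)) + (rho - rho_psi) / gam)
        ((rho + rho_psi) * lam / (gam * (gam - lam)) + (rho + rho_psi) / gam) := by
  have hgam : 0 < gam := hlam.trans hlamgam
  have hD : 0 < gam * (gam - lam) := mul_pos hgam (sub_pos.mpr hlamgam)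
  have hgap := (left_slope_gt_right_slope_iff (rho := rho) (rho_psi := rho_psi) hlam hlamgam).mpr
    hcond
  have hρ : 0 < rho / gam := div_pos hrho hgam
  have hcross : 0 < (rho + 2 * rho_psi) * lam / (gam * (gam - lam)) + (rho + 2 * rho_psi) / gam :=
    add_pos (div_pos (by positivity) hD) (div_pos (by positivity) hgam)
  refine max_lt (lt_min (sub_pos.mp ?_) (sub_pos.mp ?_)) (lt_min hgap (sub_pos.mp ?_))
  · exact hρ.trans_eq (by ring)
  · exact hcross.trans_eq (by ring)
  · exact hρ.trans_eq (by ring)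

end BelykhSlopes

theorem image_cones_disjoint_general
    (lam gam rho rho_psi : ℝ)
    (hlam : 0 < lam) (hlamgam : lam < gam)
    (hrho : 0 < rho)
    (hrp_nonneg : 0 ≤ rho_psi) :
    ((-rho_psi * lam / (gam * (gam - lam)) + (rho - rho_psi) / gam >
        (rho + rho_psi) * lam / (gam * (gam - lam)) + rho_psi / gam) ↔
      gam * (rho - 2 * rho_psi) > 2 * lam * rho) ∧
    (gam * (rho - 2 * rho_psi) > 2 * lam * rho →
      {w : ℝ × ℝ | ∃ s t : ℝ, 0 ≤ s ∧ 0 ≤ t ∧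
          w = s • ((-rho_psi * lam / (gam * (gam - lam)) + (rho - rho_psi) / gam, 1) : ℝ × ℝ)
            + t • (((rho + rho_psi) * lam / (gam * (gam - lam)) + (rho + rho_psi) / gam, 1) : ℝ × ℝ)} ∩
      {w : ℝ × ℝ | ∃ s t : ℝ, 0 ≤ s ∧ 0 ≤ t ∧
          w = s • ((-rho_psi * lam / (gam * (gam - lam)) - rho_psi / gam, 1) : ℝ × ℝ)
            + t • (((rho + rho_psi) * lam / (gam * (gam - lam)) + rho_psi / gam, 1) : ℝ × ℝ)}
      = {0}) ∧
    (rho_psi = 0 →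
      ((-rho_psi * lam / (gam * (gam - lam)) + (rho - rho_psi) / gam >
          (rho + rho_psi) * lam / (gam * (gam - lam)) + rho_psi / gam) ↔
        gam > 2 * lam)) := by
  refine ⟨left_slope_gt_right_slope_iff hlam hlamgam, fun hcond => ?_, fun h0 => ?_⟩
  · exact slopeCone.inter_eq_zero (image_slopes_separated hlam hlamgam hrho hrp_nonneg hcond)
  · rw [left_slope_gt_right_slope_iff hlam hlamgam, h0, mul_zero, sub_zero, gt_iff_lt, gt_iff_lt,
      mul_lt_mul_iff_left₀ hrho]

/-- The inequality
`-ρ_ψ λ/(γ(γ-λ)) + (ρ-ρ_ψ)/γ > (ρ+ρ_ψ) λ/(γ(γ-λ)) + ρ_ψ/γ` holds iff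
`γ(ρ - 2ρ_ψ) > 2λρ`; under this condition the two image cones (spanned by the stated
vectors) intersect only in `0`; and in the limiting case `ρ_ψ = 0` the condition
reads `γ > 2λ`. -/
theorem image_cones_disjoint
    (lam gam rho rho_psi : ℝ)
    (hlam : 0 < lam) (hlamgam : lam < gam)
    (hrho : 0 < rho)
    (hrp_nonneg : 0 ≤ rho_psi) (hrp_lt : rho_psi < rho / 2) :
    ((-rho_psi * lam / (gam * (gam - lam)) + (rho - rho_psi) / gam >
        (rho + rho_psi) * lam / (gam * (gam - lam)) + rho_psi / gam) ↔
      gam * (rho - 2 * rho_psi) > 2 * lam * rho) ∧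
    (gam * (rho - 2 * rho_psi) > 2 * lam * rho →
      {w : ℝ × ℝ | ∃ s t : ℝ, 0 ≤ s ∧ 0 ≤ t ∧
          w = s • ((-rho_psi * lam / (gam * (gam - lam)) + (rho - rho_psi) / gam, 1) : ℝ × ℝ)
            + t • (((rho + rho_psi) * lam / (gam * (gam - lam)) + (rho + rho_psi) / gam, 1) : ℝ × ℝ)} ∩
      {w : ℝ × ℝ | ∃ s t : ℝ, 0 ≤ s ∧ 0 ≤ t ∧
          w = s • ((-rho_psi * lam / (gam * (gam - lam)) - rho_psi / gam, 1) : ℝ × ℝ)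
            + t • (((rho + rho_psi) * lam / (gam * (gam - lam)) + rho_psi / gam, 1) : ℝ × ℝ)}
      = {0}) ∧
    (rho_psi = 0 →
      ((-rho_psi * lam / (gam * (gam - lam)) + (rho - rho_psi) / gam >
          (rho + rho_psi) * lam / (gam * (gam - lam)) + rho_psi / gam) ↔
        gam > 2 * lam)) :=
  image_cones_disjoint_general lam gam rho rho_psi hlam hlamgam hrho hrp_nonneg
end

section
/- Let 0 < λ < γ and R ≥ 0. Let A₁, …, A_n be 2×2 real matrices each of the form Aᵢ = [[λ, cᵢ],[0, γ]] for some cᵢ ∈ ℝ. Then every vector v = (v₁, v₂) ∈ ℝ² with |v₁| ≤ R·|v₂| satisfies ‖A_n ⋯ A₁ v‖ ≥ (γⁿ / √(1 + R²)) · ‖v‖, where ‖·‖ is the Euclidean norm. Moreover A_n ⋯ A₁ (1,0) = (λⁿ, 0), so horizontal vectors are contracted by exactly the factor λⁿ. -/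
/-- The product `A_n ⋯ A₁` applied to `v ∈ ℝ²`, where `Aᵢ = [[λ, cᵢ],[0, γ]]`
(so the matrix with the last index is applied last). -/
def triangularProd (lam gam : ℝ) : (n : ℕ) → (Fin n → ℝ) → ℝ × ℝ → ℝ × ℝ
  | 0, _, v => v
  | n + 1, c, v =>
      let w := triangularProd lam gam n (fun i => c i.castSucc) v
      (lam * w.1 + c (Fin.last n) * w.2, gam * w.2)

/-! The second coordinate of a product of upper triangular matrices only sees the diagonal
entries, so it is `γⁿ v₂`. In the cone `|v₁| ≤ R|v₂|` we have `‖v‖ ≤ √(1 + R²) |v₂|`, and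
`|γⁿ v₂|` is a lower bound for the norm of the image. -/

lemma triangularProd_snd (lam gam : ℝ) (n : ℕ) (c : Fin n → ℝ) (v : ℝ × ℝ) :
    (triangularProd lam gam n c v).2 = gam ^ n * v.2 := by
  induction n with
  | zero => simp [triangularProd]
  | succ n ih => simp only [triangularProd, ih]; ring

lemma triangularProd_one_zero (lam gam : ℝ) (n : ℕ) (c : Fin n → ℝ) :
    triangularProd lam gam n c (1, 0) = (lam ^ n, 0) := by
  induction n with
  | zero => simp [triangularProd]
  | succ n ih => simp [triangularProd, ih, pow_succ, mul_comm]

lemma sqrt_sq_add_sq_le_of_abs_le_mul_abs {x y R : ℝ} (h : |x| ≤ R * |y|) :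
    Real.sqrt (x ^ 2 + y ^ 2) ≤ Real.sqrt (1 + R ^ 2) * |y| := by
  have hx : x ^ 2 ≤ R ^ 2 * y ^ 2 := by
    simpa only [sq_abs, mul_pow] using pow_le_pow_left₀ (abs_nonneg x) h 2
  calc Real.sqrt (x ^ 2 + y ^ 2) ≤ Real.sqrt ((1 + R ^ 2) * y ^ 2) :=
        Real.sqrt_le_sqrt (by linarith)
    _ = Real.sqrt (1 + R ^ 2) * |y| := by
        rw [Real.sqrt_mul (by positivity), Real.sqrt_sq_eq_abs]

theorem triangular_products_hyperbolicity_general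
    (lam gam R : ℝ)
    (n : ℕ) (c : Fin n → ℝ) :
    (∀ v : ℝ × ℝ, |v.1| ≤ R * |v.2| →
      gam ^ n / Real.sqrt (1 + R ^ 2) * Real.sqrt (v.1 ^ 2 + v.2 ^ 2) ≤
        Real.sqrt ((triangularProd lam gam n c v).1 ^ 2 +
          (triangularProd lam gam n c v).2 ^ 2)) ∧
    triangularProd lam gam n c (1, 0) = (lam ^ n, 0) := by
  refine ⟨fun v hv => ?_, triangularProd_one_zero lam gam n c⟩
  have hS : 0 < Real.sqrt (1 + R ^ 2) := Real.sqrt_pos.mpr (by positivity)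
  calc gam ^ n / Real.sqrt (1 + R ^ 2) * Real.sqrt (v.1 ^ 2 + v.2 ^ 2)
      ≤ |gam ^ n| / Real.sqrt (1 + R ^ 2) * (Real.sqrt (1 + R ^ 2) * |v.2|) :=
        mul_le_mul (div_le_div_of_nonneg_right (le_abs_self _) hS.le)
          (sqrt_sq_add_sq_le_of_abs_le_mul_abs hv) (Real.sqrt_nonneg _) (by positivity)
    _ = |(triangularProd lam gam n c v).2| := by
        rw [triangularProd_snd, abs_mul]; field_simp
    _ ≤ _ := Real.abs_le_sqrt (le_add_of_nonneg_left (sq_nonneg _))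

/-- If `0 < λ < γ`, `R ≥ 0` and `A₁, …, A_n` are matrices of the form
`[[λ, cᵢ],[0, γ]]`, then every vector `v` with `|v₁| ≤ R|v₂|` satisfies
`‖A_n ⋯ A₁ v‖ ≥ (γⁿ/√(1+R²))‖v‖` (Euclidean norm), while
`A_n ⋯ A₁ (1,0) = (λⁿ, 0)`. -/
theorem triangular_products_hyperbolicity
    (lam gam R : ℝ) (hlam : 0 < lam) (hlamgam : lam < gam) (hR : 0 ≤ R)
    (n : ℕ) (c : Fin n → ℝ) :
    (∀ v : ℝ × ℝ, |v.1| ≤ R * |v.2| →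
      gam ^ n / Real.sqrt (1 + R ^ 2) * Real.sqrt (v.1 ^ 2 + v.2 ^ 2) ≤
        Real.sqrt ((triangularProd lam gam n c v).1 ^ 2 +
          (triangularProd lam gam n c v).2 ^ 2)) ∧
    triangularProd lam gam n c (1, 0) = (lam ^ n, 0) :=
  triangular_products_hyperbolicity_general lam gam R n c
end

section
/- Let 1 < s < 2 and l, D > 0. There exists a constant C > 0 (depending only on s, l, D) such that for every κ ≥ 1, ∫_{−l}^{l} ∫_{−D}^{D} (b²/κ² + (a − b)²)^{−s/2} da db ≤ C · κ^{s−1}. Equivalently, the mutual s-energy (with respect to arc-length measures) of the vertical segment γ₁ = {(0, a) : |a| < D} and the steep line segment γ₂ = {(b/κ, b) : |b| < l} through the origin of slope κ is O(κ^{s−1}) as κ → ∞. -/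
/-!
For fixed `b ≠ 0` put `c = |b| / κ`. The inner integral is at most the integral of
`(c² + t²)^(-s/2)` over the whole line, and the substitution `t = c u` shows that this equals
`c^(1-s) ∫ (1 + u²)^(-s/2) = κ^(s-1) |b|^(1-s) ∫ (1 + u²)^(-s/2)`, which is finite because `s > 1`.
Since `s < 2`, the weight `|b|^(1-s)` is integrable near `0`, so integrating in `b` costs only a
constant factor.
-/

open MeasureTheory Real

lemma rpow_sq_add_sq_eq {c : ℝ} (hc : 0 < c) (s t : ℝ) :
    (c ^ 2 + t ^ 2) ^ (-s / 2) = c ^ (-s) * (1 + (c⁻¹ * t) ^ 2) ^ (-s / 2) := by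
  have hcs : c ^ (-s) = (c ^ 2) ^ (-s / 2) := by
    rw [← rpow_natCast c 2, ← rpow_mul hc.le]
    ring_nf
  rw [hcs, ← mul_rpow (by positivity) (by positivity)]
  congr 1
  field_simp

lemma integrable_rpow_sq_add_sq {s c : ℝ} (hs : 1 < s) (hc : 0 < c) :
    Integrable fun t : ℝ => (c ^ 2 + t ^ 2) ^ (-s / 2) := by
  have hone : Integrable fun u : ℝ => (1 + u ^ 2) ^ (-s / 2) := by
    simpa [norm_eq_abs, sq_abs] using
      integrable_rpow_neg_one_add_norm_sq (E := ℝ) (μ := volume) (r := s) (by simpa using hs)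
  simp_rw [rpow_sq_add_sq_eq hc s]
  exact (hone.comp_mul_left' (inv_ne_zero hc.ne')).const_mul _

lemma integral_rpow_sq_add_sq {c : ℝ} (hc : 0 < c) (s : ℝ) :
    ∫ t : ℝ, (c ^ 2 + t ^ 2) ^ (-s / 2) = c ^ (1 - s) * ∫ u : ℝ, (1 + u ^ 2) ^ (-s / 2) := by
  simp_rw [rpow_sq_add_sq_eq hc s]
  rw [integral_const_mul, Measure.integral_comp_inv_mul_left (fun u => (1 + u ^ 2) ^ (-s / 2)),
    abs_of_pos hc, smul_eq_mul, ← mul_assoc, ← rpow_add_one hc.ne']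
  ring_nf

lemma setIntegral_rpow_sq_add_sub_sq_le {s c : ℝ} (hs : 1 < s) (hc : 0 < c) (S : Set ℝ) (b : ℝ) :
    ∫ a in S, (c ^ 2 + (a - b) ^ 2) ^ (-s / 2) ≤
      c ^ (1 - s) * ∫ u : ℝ, (1 + u ^ 2) ^ (-s / 2) :=
  calc ∫ a in S, (c ^ 2 + (a - b) ^ 2) ^ (-s / 2)
      ≤ ∫ a, (c ^ 2 + (a - b) ^ 2) ^ (-s / 2) :=
        setIntegral_le_integral ((integrable_rpow_sq_add_sq hs hc).comp_sub_right b)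
          (.of_forall fun _ => by positivity)
    _ = ∫ t, (c ^ 2 + t ^ 2) ^ (-s / 2) :=
        integral_sub_right_eq_self (fun t => (c ^ 2 + t ^ 2) ^ (-s / 2)) b
    _ = c ^ (1 - s) * ∫ u : ℝ, (1 + u ^ 2) ^ (-s / 2) := integral_rpow_sq_add_sq hc s

lemma locallyIntegrable_abs_rpow {r : ℝ} (hr : -1 < r) :
    LocallyIntegrable fun x : ℝ => |x| ^ r :=
  locallyIntegrable_of_norm_le_rpow (μ := volume) (by simp) (C := 1) (α := -r)
    (by simpa using neg_lt.mp hr)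
    (.of_forall fun x => by simp [norm_eq_abs, abs_of_nonneg (rpow_nonneg (abs_nonneg x) r)])
    (continuous_abs.measurable.pow_const r).aestronglyMeasurable

lemma setIntegral_steep_kernel_le {s κ : ℝ} (hs : 1 < s) (hκ : 0 < κ) (S : Set ℝ) {b : ℝ}
    (hb : b ≠ 0) :
    ∫ a in S, (b ^ 2 / κ ^ 2 + (a - b) ^ 2) ^ (-s / 2) ≤
      (∫ u : ℝ, (1 + u ^ 2) ^ (-s / 2)) * κ ^ (s - 1) * |b| ^ (1 - s) := by
  have hsq : b ^ 2 / κ ^ 2 = (|b| / κ) ^ 2 := by rw [div_pow, sq_abs]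
  have hpow : (|b| / κ) ^ (1 - s) = κ ^ (s - 1) * |b| ^ (1 - s) := by
    rw [div_rpow (abs_nonneg b) hκ.le, div_eq_mul_inv, ← rpow_neg hκ.le, neg_sub, mul_comm]
  rw [hsq, mul_assoc, ← hpow, mul_comm]
  exact setIntegral_rpow_sq_add_sub_sq_le hs (div_pos (abs_pos.mpr hb) hκ) S b

theorem energy_transversal_intersection_general (s l D : ℝ)
    (hs1 : 1 < s) (hs2 : s < 2) :
    ∃ C > (0 : ℝ), ∀ κ : ℝ, 1 ≤ κ →
      (∫ b in Set.Icc (-l) l, ∫ a in Set.Icc (-D) D,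
          ((b ^ 2 / κ ^ 2 + (a - b) ^ 2) ^ (-s / 2) : ℝ)) ≤
        C * κ ^ (s - 1) := by
  set I := ∫ u : ℝ, (1 + u ^ 2) ^ (-s / 2)
  set J := ∫ b in Set.Icc (-l) l, |b| ^ (1 - s)
  have hJint : IntegrableOn (fun b : ℝ => |b| ^ (1 - s)) (Set.Icc (-l) l) :=
    (locallyIntegrable_abs_rpow (by linarith)).integrableOn_isCompact isCompact_Icc
  refine ⟨I * J + 1, by positivity, fun κ hκ => ?_⟩
  have hκ0 : 0 < κ := one_pos.trans_le hκ
  calc (∫ b in Set.Icc (-l) l, ∫ a in Set.Icc (-D) D, (b ^ 2 / κ ^ 2 + (a - b) ^ 2) ^ (-s / 2))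
      ≤ ∫ b in Set.Icc (-l) l, I * κ ^ (s - 1) * |b| ^ (1 - s) := by
        refine integral_mono_of_nonneg (.of_forall fun _ => integral_nonneg fun _ => by positivity)
          (hJint.const_mul _) (ae_restrict_of_ae ?_)
        filter_upwards [Measure.ae_ne volume 0] with b hb
        exact setIntegral_steep_kernel_le hs1 hκ0 _ hb
    _ = I * J * κ ^ (s - 1) := by rw [integral_const_mul]; ring
    _ ≤ (I * J + 1) * κ ^ (s - 1) := by gcongr; linarith

/-- for `1 < s < 2` and `l, D > 0` there is a constant `C > 0`
(depending only on `s, l, D`) such that for all `κ ≥ 1`,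
`∫_{-l}^{l} ∫_{-D}^{D} (b²/κ² + (a-b)²)^{-s/2} da db ≤ C κ^{s-1}`, i.e. the mutual
`s`-energy of the vertical segment `{(0,a) : |a| < D}` and the steep segment
`{(b/κ, b) : |b| < l}` of slope `κ` is `O(κ^{s-1})`. -/
theorem energy_transversal_intersection (s l D : ℝ)
    (hs1 : 1 < s) (hs2 : s < 2) (hl : 0 < l) (hD : 0 < D) :
    ∃ C > (0 : ℝ), ∀ κ : ℝ, 1 ≤ κ →
      (∫ b in Set.Icc (-l) l, ∫ a in Set.Icc (-D) D,
          ((b ^ 2 / κ ^ 2 + (a - b) ^ 2) ^ (-s / 2) : ℝ)) ≤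
        C * κ ^ (s - 1) :=
  energy_transversal_intersection_general s l D hs1 hs2
end
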